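/- Lemma 2 (one-step decrease bound on the mixed-integer value function with a perfect model): for any x₀ ∈ ℝ^n and any u₀ ∈ ℝ^p with F x₀ + G u₀ ≤ h componentwise and V u₀ ∈ {0,1}^m, the horizon-T mixed-integer value function satisfies θ_T(A x₀ + B u₀) ≥ θ_T(x₀) − |Q x₀|² − |R u₀|², where the inequality is in the extended nonnegative reals [0, +∞]. -/

import Mathlib

/-!
Prepending the step `(x₀, u₀)` to any feasible horizon-`T` trajectory from `A x₀ + B u₀`
gives a feasible horizon-`(T + 1)` trajectory from `x₀` whose cost is larger by exactly
`|Q x₀|² + |R u₀|²`. Hence `θ_{T+1}(x₀) ≤ |Q x₀|² + |R u₀|² + θ_T(A x₀ + B u₀)`, and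
`θ_T ≤ θ_{T+1}` because truncating a trajectory keeps it feasible and does not raise its cost.
-/

open Matrix

/-- The squared Euclidean norm `|v|²` of a vector in `ℝ^k`. -/
noncomputable def sqNorm {k : ℕ} (v : Fin k → ℝ) : ℝ := ∑ i, v i ^ 2

variable {n p q r c m : ℕ}

/-- Mixed-integer feasibility of a trajectory `((x_t)_{t=0}^S, (u_t)_{t=0}^{S-1})`
from the initial state `x̄`: dynamics, polyhedral constraints, and binary constraints
`V u_t ∈ {0,1}^m` hold for `t = 0,…,S−1`. -/
def MIFeasible (S : ℕ)
    (A : Matrix (Fin n) (Fin n) ℝ) (B : Matrix (Fin n) (Fin p) ℝ)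
    (F : Matrix (Fin c) (Fin n) ℝ) (G : Matrix (Fin c) (Fin p) ℝ)
    (V : Matrix (Fin m) (Fin p) ℝ) (h : Fin c → ℝ)
    (xbar : Fin n → ℝ)
    (x : ℕ → Fin n → ℝ) (u : ℕ → Fin p → ℝ) : Prop :=
  x 0 = xbar ∧
  (∀ t < S, x (t + 1) = A *ᵥ x t + B *ᵥ u t) ∧
  (∀ t < S, ∀ i, (F *ᵥ x t + G *ᵥ u t) i ≤ h i) ∧
  (∀ t < S, ∀ i, (V *ᵥ u t) i = 0 ∨ (V *ᵥ u t) i = 1)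

/-- Cost `Σ_{t=0}^S |Q x_t|² + Σ_{t=0}^{S-1} |R u_t|²` of a trajectory of horizon `S`. -/
noncomputable def trajCost (S : ℕ) (Q : Matrix (Fin q) (Fin n) ℝ) (R : Matrix (Fin r) (Fin p) ℝ)
    (x : ℕ → Fin n → ℝ) (u : ℕ → Fin p → ℝ) : ℝ :=
  ∑ t ∈ Finset.range (S + 1), sqNorm (Q *ᵥ x t) + ∑ t ∈ Finset.range S, sqNorm (R *ᵥ u t)

/-- The horizon-`S` mixed-integer value function `θ_S(x̄) ∈ [0, +∞]`: the infimum of the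
costs of mixed-integer feasible trajectories from `x̄` (with `inf ∅ = +∞`). -/
noncomputable def miValue (S : ℕ)
    (A : Matrix (Fin n) (Fin n) ℝ) (B : Matrix (Fin n) (Fin p) ℝ)
    (Q : Matrix (Fin q) (Fin n) ℝ) (R : Matrix (Fin r) (Fin p) ℝ)
    (F : Matrix (Fin c) (Fin n) ℝ) (G : Matrix (Fin c) (Fin p) ℝ)
    (V : Matrix (Fin m) (Fin p) ℝ) (h : Fin c → ℝ)
    (xbar : Fin n → ℝ) : ENNReal :=
  ⨅ (x : ℕ → Fin n → ℝ) (u : ℕ → Fin p → ℝ)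
    (_ : MIFeasible S A B F G V h xbar x u), ENNReal.ofReal (trajCost S Q R x u)

lemma sqNorm_nonneg {k : ℕ} (v : Fin k → ℝ) : 0 ≤ sqNorm v :=
  Finset.sum_nonneg fun _ _ => sq_nonneg _

section ValueFunction

variable {S S' : ℕ} {A : Matrix (Fin n) (Fin n) ℝ} {B : Matrix (Fin n) (Fin p) ℝ}
  {Q : Matrix (Fin q) (Fin n) ℝ} {R : Matrix (Fin r) (Fin p) ℝ}
  {F : Matrix (Fin c) (Fin n) ℝ} {G : Matrix (Fin c) (Fin p) ℝ}
  {V : Matrix (Fin m) (Fin p) ℝ} {h : Fin c → ℝ}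
  {x : ℕ → Fin n → ℝ} {u : ℕ → Fin p → ℝ} {x0 : Fin n → ℝ} {u0 : Fin p → ℝ}

lemma MIFeasible.mono (hSS' : S ≤ S') (hx : MIFeasible S' A B F G V h x0 x u) :
    MIFeasible S A B F G V h x0 x u := by
  obtain ⟨hinit, hdyn, hcon, hbin⟩ := hx
  exact ⟨hinit, fun t ht => hdyn t (ht.trans_le hSS'), fun t ht => hcon t (ht.trans_le hSS'),
    fun t ht => hbin t (ht.trans_le hSS')⟩

lemma MIFeasible.cons (hfeas : ∀ i, (F *ᵥ x0 + G *ᵥ u0) i ≤ h i)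
    (hbin : ∀ i, (V *ᵥ u0) i = 0 ∨ (V *ᵥ u0) i = 1)
    (hx : MIFeasible S A B F G V h (A *ᵥ x0 + B *ᵥ u0) x u) :
    MIFeasible (S + 1) A B F G V h x0 (Stream'.cons x0 x) (Stream'.cons u0 u) := by
  obtain ⟨hinit, hdyn, hcon, hbin'⟩ := hx
  refine ⟨rfl, fun t ht => ?_, fun t ht => ?_, fun t ht => ?_⟩ <;> cases t
  exacts [hinit, hdyn _ (by omega), hfeas, hcon _ (by omega), hbin, hbin' _ (by omega)]

lemma trajCost_nonneg : 0 ≤ trajCost S Q R x u :=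
  add_nonneg (Finset.sum_nonneg fun _ _ => sqNorm_nonneg _)
    (Finset.sum_nonneg fun _ _ => sqNorm_nonneg _)

lemma trajCost_mono (hSS' : S ≤ S') : trajCost S Q R x u ≤ trajCost S' Q R x u :=
  add_le_add
    (Finset.sum_le_sum_of_subset_of_nonneg (Finset.range_subset_range.2 (Nat.succ_le_succ hSS'))
      fun _ _ _ => sqNorm_nonneg _)
    (Finset.sum_le_sum_of_subset_of_nonneg (Finset.range_subset_range.2 hSS')
      fun _ _ _ => sqNorm_nonneg _)

lemma trajCost_cons :
    trajCost (S + 1) Q R (Stream'.cons x0 x) (Stream'.cons u0 u) =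
      sqNorm (Q *ᵥ x0) + sqNorm (R *ᵥ u0) + trajCost S Q R x u := by
  simp only [trajCost, Finset.sum_range_succ' _ (S + 1), Finset.sum_range_succ' _ S]
  simp only [Stream'.cons]
  ring

lemma miValue_le_ofReal_trajCost (hx : MIFeasible S A B F G V h x0 x u) :
    miValue S A B Q R F G V h x0 ≤ ENNReal.ofReal (trajCost S Q R x u) :=
  iInf_le_of_le x (iInf_le_of_le u (iInf_le _ hx))

lemma miValue_mono (hSS' : S ≤ S') :
    miValue S A B Q R F G V h x0 ≤ miValue S' A B Q R F G V h x0 :=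
  le_iInf fun _ => le_iInf₂ fun _ hx => (miValue_le_ofReal_trajCost (hx.mono hSS')).trans
    (ENNReal.ofReal_le_ofReal (trajCost_mono hSS'))

lemma miValue_succ_le (hfeas : ∀ i, (F *ᵥ x0 + G *ᵥ u0) i ≤ h i)
    (hbin : ∀ i, (V *ᵥ u0) i = 0 ∨ (V *ᵥ u0) i = 1) :
    miValue (S + 1) A B Q R F G V h x0 ≤
      ENNReal.ofReal (sqNorm (Q *ᵥ x0) + sqNorm (R *ᵥ u0)) +
        miValue S A B Q R F G V h (A *ᵥ x0 + B *ᵥ u0) := by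
  simp only [miValue, ENNReal.add_iInf]
  refine le_iInf fun x => le_iInf₂ fun u hx => ?_
  rw [← ENNReal.ofReal_add (add_nonneg (sqNorm_nonneg _) (sqNorm_nonneg _)) trajCost_nonneg,
    ← trajCost_cons]
  exact miValue_le_ofReal_trajCost (hx.cons hfeas hbin)

end ValueFunction

theorem value_function_one_step_decrease_general (n p q r c m T : ℕ)
    (A : Matrix (Fin n) (Fin n) ℝ) (B : Matrix (Fin n) (Fin p) ℝ)
    (Q : Matrix (Fin q) (Fin n) ℝ) (R : Matrix (Fin r) (Fin p) ℝ)
    (F : Matrix (Fin c) (Fin n) ℝ) (G : Matrix (Fin c) (Fin p) ℝ)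
    (V : Matrix (Fin m) (Fin p) ℝ) (h : Fin c → ℝ)
    (x0 : Fin n → ℝ) (u0 : Fin p → ℝ)
    (hfeas : ∀ i, (F *ᵥ x0 + G *ᵥ u0) i ≤ h i)
    (hbin : ∀ i, (V *ᵥ u0) i = 0 ∨ (V *ᵥ u0) i = 1) :
    miValue T A B Q R F G V h x0
        - ENNReal.ofReal (sqNorm (Q *ᵥ x0) + sqNorm (R *ᵥ u0)) ≤
      miValue T A B Q R F G V h (A *ᵥ x0 + B *ᵥ u0) :=
  tsub_le_iff_left.2 <| (miValue_mono T.le_succ).trans (miValue_succ_le hfeas hbin)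

/-- **Lemma 2 (one-step decrease bound on the mixed-integer value function with a
perfect model):** for any feasible control `u₀` at `x₀`, the horizon-`T` mixed-integer
value function satisfies `θ_T(A x₀ + B u₀) ≥ θ_T(x₀) − |Q x₀|² − |R u₀|²` in `[0, +∞]`
(with truncated subtraction). -/
theorem value_function_one_step_decrease (n p q r c m T : ℕ) (hT : 1 ≤ T)
    (A : Matrix (Fin n) (Fin n) ℝ) (B : Matrix (Fin n) (Fin p) ℝ)
    (Q : Matrix (Fin q) (Fin n) ℝ) (R : Matrix (Fin r) (Fin p) ℝ)
    (F : Matrix (Fin c) (Fin n) ℝ) (G : Matrix (Fin c) (Fin p) ℝ)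
    (V : Matrix (Fin m) (Fin p) ℝ) (h : Fin c → ℝ)
    (x0 : Fin n → ℝ) (u0 : Fin p → ℝ)
    (hfeas : ∀ i, (F *ᵥ x0 + G *ᵥ u0) i ≤ h i)
    (hbin : ∀ i, (V *ᵥ u0) i = 0 ∨ (V *ᵥ u0) i = 1) :
    miValue T A B Q R F G V h x0
        - ENNReal.ofReal (sqNorm (Q *ᵥ x0) + sqNorm (R *ᵥ u0)) ≤
      miValue T A B Q R F G V h (A *ᵥ x0 + B *ᵥ u0) :=
  value_function_one_step_decrease_general n p q r c m T A B Q R F G V h x0 u0 hfeas hbin
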